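/- It is decidable, given a closed μωT_s-expression t of syntactic category T over Σ, whether the language |t| denoted by t consists of well-ordered words only. -/

import Mathlib

/-! ## Countable words over an alphabet -/

/-- A "preword" over `A`: a countable linear order realized as a set of rationals,
together with a labeling of its elements by letters of `A`. -/
structure PreWord (A : Type) : Type where
  carrier : Set ℚ
  label : carrier → A

namespace PreWord

/-- Two prewords are equivalent iff there is an order isomorphism between their
carriers preserving the labels. -/
def Equiv {A : Type} (u v : PreWord A) : Prop :=
  ∃ f : u.carrier ≃o v.carrier, ∀ q, v.label (f q) = u.label q

theorem Equiv.refl {A : Type} (u : PreWord A) : Equiv u u :=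
  ⟨OrderIso.refl _, fun _ => rfl⟩

theorem Equiv.symm {A : Type} {u v : PreWord A} : Equiv u v → Equiv v u := by
  rintro ⟨f, hf⟩
  exact ⟨f.symm, fun q => by rw [← hf (f.symm q), OrderIso.apply_symm_apply]⟩

theorem Equiv.trans {A : Type} {u v w : PreWord A} : Equiv u v → Equiv v w → Equiv u w := by
  rintro ⟨f, hf⟩ ⟨g, hg⟩
  exact ⟨f.trans g, fun q => by rw [OrderIso.trans_apply, hg, hf]⟩

instance setoid (A : Type) : Setoid (PreWord A) where
  r := Equiv
  iseqv := ⟨Equiv.refl, Equiv.symm, Equiv.trans⟩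

end PreWord

/-- A countable word over `A`: an isomorphism class of labeled countable linear orders. -/
def Word (A : Type) : Type := Quotient (PreWord.setoid A)

namespace Word

/-- The word determined by an arbitrary countable linear order `I` with labeling `lab`. -/
noncomputable def of {I A : Type} [LinearOrder I] [Countable I] (lab : I → A) : Word A :=
  let e : I ↪o ℚ := (Order.embedding_from_countable_to_dense I ℚ).some
  Quotient.mk _ ⟨Set.range e, fun q => lab (Classical.choose q.2)⟩

/-- The empty word. -/
def eps (A : Type) : Word A :=
  Quotient.mk _ ⟨∅, fun q => absurd q.2 (Set.notMem_empty q.1)⟩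

/-- The one-letter word. -/
def letter {A : Type} (a : A) : Word A :=
  Quotient.mk _ ⟨{(0 : ℚ)}, fun _ => a⟩

/-- Relabeling of a word along a function. -/
noncomputable def map {A B : Type} (g : A → B) (w : Word A) : Word B :=
  Quotient.mk _ ⟨(Quotient.out w).carrier, fun q => g ((Quotient.out w).label q)⟩

instance sigmaLexCountable {I : Type} (κ : I → Type) [Countable I] [∀ i, Countable (κ i)] :
    Countable (Σₗ i, κ i) :=
  inferInstanceAs (Countable (Σ i, κ i))

/-- Generalized concatenation `∏_{i ∈ I} w i` of words over a countable linear order `I`: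
the word on the lexicographically ordered disjoint sum of the underlying orders. -/
noncomputable def concat {I A : Type} [LinearOrder I] [Countable I] (w : I → Word A) : Word A :=
  Word.of (I := Σₗ i : I, (Quotient.out (w i)).carrier)
    (fun p => (Quotient.out (w (ofLex p).1)).label (ofLex p).2)

/-- Binary concatenation of words. -/
noncomputable def append {A : Type} (u v : Word A) : Word A :=
  concat (I := Fin 2) ![u, v]

/-- The finite word given by a list of letters. -/
noncomputable def ofList {A : Type} (l : List A) : Word A :=
  Word.of (I := Fin l.length) l.get

/-- Concatenation of a finite list of words. -/
noncomputable def concatList {A : Type} (l : List (Word A)) : Word A :=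
  concat (I := Fin l.length) l.get

/-- A word is scattered if its underlying linear order has no suborder isomorphic to `ℚ`,
equivalently there is no order embedding of `ℚ` into it. -/
def IsScattered {A : Type} (w : Word A) : Prop :=
  IsEmpty (ℚ ↪o (Quotient.out w).carrier)

/-- A word is well-ordered if its underlying linear order has no suborder isomorphic to the
negative integers, i.e. there is no order embedding of `ℕᵒᵈ` into it. -/
def IsWellOrdered {A : Type} (w : Word A) : Prop :=
  IsEmpty (ℕᵒᵈ ↪o (Quotient.out w).carrier)

end Word

/-! ## Languages and their operations -/

namespace Lang

/-- Concatenation of languages. -/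
noncomputable def conc {A : Type} (L₁ L₂ : Set (Word A)) : Set (Word A) :=
  {w | ∃ u ∈ L₁, ∃ v ∈ L₂, w = Word.append u v}

/-- ω-power of a language: `L^ω = {∏_{i∈ℕ} w i : ∀ i, w i ∈ L}`. -/
noncomputable def omegaPow {A : Type} (L : Set (Word A)) : Set (Word A) :=
  {w | ∃ f : ℕ → Word A, (∀ i, f i ∈ L) ∧ w = Word.concat f}

end Lang
/-! ## Pairs of words and their operations -/

namespace PairLang

/-- Product of pairs of words: `(u,v)·(u',v') = (uu', v'v)`. -/
noncomputable def pairMul {A : Type} (p q : Word A × Word A) : Word A × Word A :=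
  (Word.append p.1 q.1, Word.append q.2 p.2)

/-- Concatenation of sets of pairs of words. -/
noncomputable def conc {A : Type} (L L' : Set (Word A × Word A)) : Set (Word A × Word A) :=
  {r | ∃ p ∈ L, ∃ q ∈ L', r = pairMul p q}

/-- Kleene star of a set of pairs of words: `L^* = {(ε,ε)} ∪ L ∪ L·L ∪ ⋯`. -/
noncomputable def star {A : Type} (L : Set (Word A × Word A)) : Set (Word A × Word A) :=
  {r | ∃ l : List (Word A × Word A), (∀ p ∈ l, p ∈ L) ∧
        r = l.foldr pairMul (Word.eps A, Word.eps A)}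

instance sumLexCountable : Countable (ℕ ⊕ₗ ℕᵒᵈ) :=
  inferInstanceAs (Countable (ℕ ⊕ ℕᵒᵈ))

/-- The word `∏_{i∈ℕ}(u_i, v_i) = (u₀u₁⋯)(⋯v₁v₀)`: the concatenation of the first
components in increasing order of `i` followed by the second components in decreasing
order of `i`. -/
noncomputable def omegaWord {A : Type} (f : ℕ → Word A × Word A) : Word A :=
  Word.concat (I := ℕ ⊕ₗ ℕᵒᵈ)
    (fun i => Sum.elim (fun n : ℕ => (f n).1)
      (fun n : ℕᵒᵈ => (f (OrderDual.ofDual n)).2) (ofLex i))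

/-- ω-power of a set of pairs of words, a language of words. -/
noncomputable def omegaPow {A : Type} (L : Set (Word A × Word A)) : Set (Word A) :=
  {w | ∃ f : ℕ → Word A × Word A, (∀ i, f i ∈ L) ∧ w = omegaWord f}

/-- `L₁ × L₂ = {(u,v) : u ∈ L₁, v ∈ L₂}`. -/
def prod {A : Type} (L₁ L₂ : Set (Word A)) : Set (Word A × Word A) :=
  {p | p.1 ∈ L₁ ∧ p.2 ∈ L₂}

end PairLang
/-! ## μωT_s-expressions -/

mutual
  /-- `μωT_s`-expressions of syntactic category `T` over the alphabet `A`: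
  `T ::= a | ε | x | T+T | T·T | μx.T | P^ω`. -/
  inductive TS (A : Type) : Type
    | letter : A → TS A
    | eps : TS A
    | var : ℕ → TS A
    | add : TS A → TS A → TS A
    | mul : TS A → TS A → TS A
    | mu : ℕ → TS A → TS A
    | omega : PS A → TS A

  /-- `μωT_s`-expressions of syntactic category `P` over the alphabet `A`:
  `P ::= T×T | P+P | P·P | P^*`. -/
  inductive PS (A : Type) : Type
    | pair : TS A → TS A → PS A
    | add : PS A → PS A → PS A
    | mul : PS A → PS A → PS A
    | star : PS A → PS A
end

mutual
  /-- The free variables of a `T`-expression. -/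
  def TS.free {A : Type} : TS A → Set ℕ
    | .letter _ => ∅
    | .eps => ∅
    | .var x => {x}
    | .add s t => s.free ∪ t.free
    | .mul s t => s.free ∪ t.free
    | .mu x s => s.free \ {x}
    | .omega p => p.free

  /-- The free variables of a `P`-expression. -/
  def PS.free {A : Type} : PS A → Set ℕ
    | .pair s t => s.free ∪ t.free
    | .add p q => p.free ∪ q.free
    | .mul p q => p.free ∪ q.free
    | .star p => p.free
end

mutual
  /-- The language denoted by a `T`-expression in the environment `ρ`. -/
  noncomputable def TS.den {A : Type} : TS A → (ℕ → Set (Word A)) → Set (Word A)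
    | .letter a, _ => {Word.letter a}
    | .eps, _ => {Word.eps A}
    | .var x, ρ => ρ x
    | .add s t, ρ => s.den ρ ∪ t.den ρ
    | .mul s t, ρ => Lang.conc (s.den ρ) (t.den ρ)
    | .mu x s, ρ => sInf {L : Set (Word A) | s.den (Function.update ρ x L) ⊆ L}
    | .omega p, ρ => PairLang.omegaPow (p.den ρ)

  /-- The set of pairs of words denoted by a `P`-expression in the environment `ρ`. -/
  noncomputable def PS.den {A : Type} : PS A → (ℕ → Set (Word A)) → Set (Word A × Word A)
    | .pair s t, ρ => PairLang.prod (s.den ρ) (t.den ρ)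
    | .add p q, ρ => p.den ρ ∪ q.den ρ
    | .mul p q, ρ => PairLang.conc (p.den ρ) (q.den ρ)
    | .star p, ρ => PairLang.star (p.den ρ)
end

mutual
  /-- The `T`-subexpressions of a `T`-expression. -/
  def TS.subT {A : Type} : TS A → Set (TS A)
    | .letter a => {.letter a}
    | .eps => {.eps}
    | .var x => {.var x}
    | .add s t => insert (.add s t) (s.subT ∪ t.subT)
    | .mul s t => insert (.mul s t) (s.subT ∪ t.subT)
    | .mu x s => insert (.mu x s) s.subT
    | .omega p => insert (.omega p) p.subT

  /-- The `T`-subexpressions of a `P`-expression. -/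
  def PS.subT {A : Type} : PS A → Set (TS A)
    | .pair s t => s.subT ∪ t.subT
    | .add p q => p.subT ∪ q.subT
    | .mul p q => p.subT ∪ q.subT
    | .star p => p.subT
end

mutual
  /-- The `P`-subexpressions of a `T`-expression. -/
  def TS.subP {A : Type} : TS A → Set (PS A)
    | .letter _ => ∅
    | .eps => ∅
    | .var _ => ∅
    | .add s t => s.subP ∪ t.subP
    | .mul s t => s.subP ∪ t.subP
    | .mu _ s => s.subP
    | .omega p => insert p p.subP

  /-- The `P`-subexpressions of a `P`-expression. -/
  def PS.subP {A : Type} : PS A → Set (PS A)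
    | .pair s t => insert (.pair s t) (s.subP ∪ t.subP)
    | .add p q => insert (.add p q) (p.subP ∪ q.subP)
    | .mul p q => insert (.mul p q) (p.subP ∪ q.subP)
    | .star p => insert (.star p) p.subP
end

mutual
  /-- Relabeling the letters of a `T`-expression. -/
  def TS.map {A B : Type} (g : A → B) : TS A → TS B
    | .letter a => .letter (g a)
    | .eps => .eps
    | .var x => .var x
    | .add s t => .add (s.map g) (t.map g)
    | .mul s t => .mul (s.map g) (t.map g)
    | .mu x s => .mu x (s.map g)
    | .omega p => .omega (p.map g)

  /-- Relabeling the letters of a `P`-expression. -/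
  def PS.map {A B : Type} (g : A → B) : PS A → PS B
    | .pair s t => .pair (s.map g) (t.map g)
    | .add p q => .add (p.map g) (q.map g)
    | .mul p q => .mul (p.map g) (q.map g)
    | .star p => .star (p.map g)
end
/-! ## A concrete encoding of `μωT_s`-expressions by natural numbers -/

mutual
  /-- A concrete injective code of `T`-expressions by natural numbers. -/
  def TS.code {A : Type} [Encodable A] : TS A → ℕ
    | .letter a => Nat.pair 0 (Encodable.encode a)
    | .eps => Nat.pair 1 0
    | .var x => Nat.pair 2 x
    | .add s t => Nat.pair 3 (Nat.pair s.code t.code)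
    | .mul s t => Nat.pair 4 (Nat.pair s.code t.code)
    | .mu x s => Nat.pair 5 (Nat.pair x s.code)
    | .omega p => Nat.pair 6 p.code

  /-- A concrete injective code of `P`-expressions by natural numbers. -/
  def PS.code {A : Type} [Encodable A] : PS A → ℕ
    | .pair s t => Nat.pair 7 (Nat.pair s.code t.code)
    | .add p q => Nat.pair 8 (Nat.pair p.code q.code)
    | .mul p q => Nat.pair 9 (Nat.pair p.code q.code)
    | .star p => Nat.pair 10 p.code
end

/-!
A language `L` is summarized by three bits: whether `L` is nonempty,
whether it contains a word that is not well-ordered, and whether it contains a nonempty word.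
The summary of each operation of the algebra depends only on the summaries of its arguments:
`uv` is well-ordered iff `u` and `v` are, and `P^ω` contains a non-well-ordered word iff some
`(u, v) ∈ P` has `u` not well-ordered or `v` nonempty, because `(u, v)^ω` ends with an
`ω*`-indexed sequence of copies of `v`. The summary map preserves unions, so it is the lower
adjoint of a Galois connection into the finite lattice `Bool × Bool × Bool`; hence it carries the
least fixed point of `μx.t` to the least fixed point of the abstract map, which is reached after
finitely many iterations from `⊥`. The summary of `|t|` is thus computed by a recursion on `t`.
On codes this recursion becomes a course-of-values recursion once, for each code `n`, the values
under all environments of the variables `≤ n` are tabulated.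
-/

/-! ## Well-foundedness of lexicographic sums -/

section WellFounded

variable {X : Type*} [Preorder X]

theorem wellFoundedLT_iff_forall_not_strictAnti :
    WellFoundedLT X ↔ ∀ f : ℕ → X, ¬StrictAnti f := by
  simp [← Set.isWF_univ_iff, Set.isWF_iff_no_descending_seq]

theorem isEmpty_natDual_orderEmbedding_iff : IsEmpty (ℕᵒᵈ ↪o X) ↔ WellFoundedLT X := by
  rw [wellFoundedLT_iff_forall_not_strictAnti]
  constructor
  · rintro ⟨h⟩ f hf
    exact h (OrderEmbedding.ofStrictMono (f ∘ OrderDual.ofDual) fun _ _ hab => hf hab)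
  · exact fun h => ⟨fun e => h (e ∘ OrderDual.toDual) fun _ _ hab => e.strictMono hab⟩

end WellFounded

namespace Sigma.Lex

variable {I : Type*} [LinearOrder I] {κ : I → Type*} [∀ i, LinearOrder (κ i)]

theorem toLex_mk_lt_toLex_mk_iff {i : I} {x y : κ i} :
    toLex (⟨i, x⟩ : Σ i, κ i) < toLex ⟨i, y⟩ ↔ x < y := by
  refine ⟨fun h => ?_, fun h => Sigma.Lex.right _ _ h⟩
  rcases h with ⟨_, _, h⟩ | ⟨_, _, h⟩
  exacts [absurd h (lt_irrefl i), h]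

theorem wellFoundedLT_iff :
    WellFoundedLT (Σₗ i, κ i) ↔ (∀ i, WellFoundedLT (κ i)) ∧ {i | Nonempty (κ i)}.IsWF := by
  simp only [wellFoundedLT_iff_forall_not_strictAnti, Set.isWF_iff_no_descending_seq]
  constructor
  · intro h
    refine ⟨fun i f hf => h (fun n => toLex ⟨i, f n⟩) fun m n hmn =>
      toLex_mk_lt_toLex_mk_iff.2 (hf hmn), fun g hg hne => ?_⟩
    exact h (fun n => toLex ⟨g n, (hne n).some⟩) fun m n hmn => Sigma.Lex.lt_def.2 (.inl (hg hmn))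
  · rintro ⟨hfib, hidx⟩ F hF
    have hanti : Antitone fun n => (F n).1 := fun m n hmn =>
      (Sigma.Lex.le_def.1 (hF.antitone hmn)).elim le_of_lt fun ⟨h, _⟩ => h.le
    -- A descending sequence has a subsequence with constant index, hence descends in one fibre.
    obtain ⟨g, hg⟩ := (Set.isWF_iff_no_descending_seq.2 hidx).isPWO.exists_monotone_subseq
      (f := fun n => (F n).1) fun n => ⟨(F n).2⟩
    have hconst : ∀ n, (F (g n)).1 = (F (g 0)).1 := fun n =>
      le_antisymm (hanti (g.monotone n.zero_le)) (hg n.zero_le)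
    generalize (F (g 0)).1 = i at hconst
    have hfibre : ∀ n, ∃ y : κ i, F (g n) = toLex ⟨i, y⟩ := by
      intro n
      have hn := hconst n
      generalize F (g n) = p at hn ⊢
      obtain ⟨j, y⟩ := p
      cases hn
      exact ⟨y, rfl⟩
    choose y hy using hfibre
    refine hfib _ y fun m n hmn => ?_
    have := hF (g.strictMono hmn)
    rwa [hy, hy, toLex_mk_lt_toLex_mk_iff] at this

end Sigma.Lex

/-! ## Well-ordered words -/

namespace Word

variable {A : Type}

theorem nonempty_orderIso_out_of {I : Type} [LinearOrder I] [Countable I] (lab : I → A) :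
    Nonempty ((Quotient.out (Word.of lab)).carrier ≃o I) := by
  obtain ⟨f, -⟩ := Quotient.exact (Quotient.out_eq (Word.of lab))
  exact ⟨f.trans OrderEmbedding.orderIso.symm⟩

theorem isWellOrdered_iff (w : Word A) :
    w.IsWellOrdered ↔ WellFoundedLT (Quotient.out w).carrier :=
  isEmpty_natDual_orderEmbedding_iff

theorem isWellOrdered_of_iff {I : Type} [LinearOrder I] [Countable I] (lab : I → A) :
    (Word.of lab).IsWellOrdered ↔ WellFoundedLT I := by
  obtain ⟨f⟩ := nonempty_orderIso_out_of lab
  rw [isWellOrdered_iff]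
  exact ⟨fun _ => f.symm.strictMono.wellFoundedLT, fun _ => f.strictMono.wellFoundedLT⟩

theorem eq_eps_iff (w : Word A) : w = eps A ↔ IsEmpty (Quotient.out w).carrier := by
  constructor
  · rintro rfl
    obtain ⟨f, -⟩ := Quotient.exact (Quotient.out_eq (eps A))
    exact f.toEquiv.isEmpty_congr.2 (Set.isEmpty_coe_sort.2 rfl)
  · intro h
    rw [← Quotient.out_eq w]
    have : IsEmpty (∅ : Set ℚ) := Set.isEmpty_coe_sort.2 rfl
    exact Quotient.sound ⟨OrderIso.ofIsEmpty _ _, fun q => isEmptyElim q⟩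

theorem of_eq_eps_iff {I : Type} [LinearOrder I] [Countable I] (lab : I → A) :
    Word.of lab = eps A ↔ IsEmpty I := by
  obtain ⟨f⟩ := nonempty_orderIso_out_of lab
  rw [eq_eps_iff, f.toEquiv.isEmpty_congr]

theorem isWellOrdered_eps : (eps A).IsWellOrdered := by
  have := (eq_eps_iff (eps A)).1 rfl
  rw [isWellOrdered_iff]
  infer_instance

theorem isWellOrdered_letter (a : A) : (letter a).IsWellOrdered := by
  obtain ⟨f, -⟩ := Quotient.exact (Quotient.out_eq (letter a))
  have : Finite (Quotient.out (letter a)).carrier := .of_equiv _ f.toEquiv.symm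
  rw [isWellOrdered_iff]
  infer_instance

theorem letter_ne_eps (a : A) : letter a ≠ eps A := by
  obtain ⟨f, -⟩ := Quotient.exact (Quotient.out_eq (letter a))
  rw [Ne, eq_eps_iff, not_isEmpty_iff]
  exact ⟨f.symm ⟨0, rfl⟩⟩

theorem isWellOrdered_concat_iff {I : Type} [LinearOrder I] [Countable I] (w : I → Word A) :
    (concat w).IsWellOrdered ↔ (∀ i, (w i).IsWellOrdered) ∧ {i | w i ≠ eps A}.IsWF := by
  rw [concat, isWellOrdered_of_iff, Sigma.Lex.wellFoundedLT_iff]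
  simp only [isWellOrdered_iff, ne_eq, eq_eps_iff, not_isEmpty_iff]

theorem concat_eq_eps_iff {I : Type} [LinearOrder I] [Countable I] (w : I → Word A) :
    concat w = eps A ↔ ∀ i, w i = eps A := by
  rw [concat, of_eq_eps_iff]
  simp only [eq_eps_iff]
  exact isEmpty_sigma

theorem isWellOrdered_append_iff (u v : Word A) :
    (append u v).IsWellOrdered ↔ u.IsWellOrdered ∧ v.IsWellOrdered := by
  rw [append, isWellOrdered_concat_iff]
  simp [Fin.forall_fin_two, (Set.toFinite _).isWF]

theorem append_eq_eps_iff (u v : Word A) :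
    append u v = eps A ↔ u = eps A ∧ v = eps A := by
  simp [append, concat_eq_eps_iff, Fin.forall_fin_two]

end Word

namespace PairLang

variable {A : Type}

theorem forall_sumLex {P : ℕ ⊕ₗ ℕᵒᵈ → Prop} :
    (∀ i, P i) ↔ (∀ n, P (toLex (.inl n))) ∧ ∀ n, P (toLex (.inr (OrderDual.toDual n))) := by
  simp [Sum.forall, OrderDual.forall]

theorem omegaWord_eq_eps_iff (f : ℕ → Word A × Word A) :
    omegaWord f = Word.eps A ↔ ∀ n, (f n).1 = Word.eps A ∧ (f n).2 = Word.eps A := by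
  rw [omegaWord, Word.concat_eq_eps_iff, forall_sumLex]
  exact forall_and.symm

theorem isWellOrdered_omegaWord {f : ℕ → Word A × Word A}
    (hf : ∀ n, (f n).1.IsWellOrdered ∧ (f n).2 = Word.eps A) : (omegaWord f).IsWellOrdered := by
  rw [omegaWord, Word.isWellOrdered_concat_iff, forall_sumLex]
  refine ⟨⟨fun n => (hf n).1, fun n => by simpa [(hf n).2] using Word.isWellOrdered_eps⟩, ?_⟩
  have hinl : (Set.range fun n : ℕ => toLex (Sum.inl n : ℕ ⊕ ℕᵒᵈ)).IsWF := by
    rw [← Set.image_univ]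
    exact ((Set.isPWO_of_wellQuasiOrderedLE _).image_of_monotone
      fun _ _ h => Sum.Lex.inl_le_inl_iff.2 h).isWF
  refine hinl.mono fun i hi => ?_
  obtain ⟨n | n, rfl⟩ := toLex.surjective i
  · exact ⟨n, rfl⟩
  · exact absurd (hf (OrderDual.ofDual n)).2 hi

theorem isWellOrdered_omegaWord_const_iff (r : Word A × Word A) :
    (omegaWord fun _ => r).IsWellOrdered ↔ r.1.IsWellOrdered ∧ r.2 = Word.eps A := by
  refine ⟨fun h => ?_, fun h => isWellOrdered_omegaWord fun _ => h⟩
  rw [omegaWord, Word.isWellOrdered_concat_iff] at h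
  refine ⟨h.1 (toLex (.inl 0)), by_contra fun hne => ?_⟩
  refine Set.isWF_iff_no_descending_seq.1 h.2 (fun n => toLex (.inr (OrderDual.toDual n)))
    (fun m n hmn => Sum.Lex.inr_lt_inr_iff.2 (OrderDual.toDual_lt_toDual.2 hmn)) fun _ => hne

end PairLang

/-! ## Least fixed points in a finite lattice -/

theorem Monotone.isFixedPt_iterate_card {β : Type*} [PartialOrder β] [Fintype β] {G : β → β}
    {x : β} (h : Monotone fun n => G^[n] x) : Function.IsFixedPt G (G^[Fintype.card β] x) := by
  obtain ⟨i, j, hij, heq⟩ := Fintype.exists_ne_map_eq_of_card_lt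
    (fun k : Fin (Fintype.card β + 1) => G^[k] x) (by simp)
  wlog hlt : i < j generalizing i j
  · exact this j i hij.symm heq.symm (lt_of_le_of_ne (not_lt.1 hlt) hij.symm)
  have hi : Function.IsFixedPt G (G^[i] x) := by
    rw [Function.IsFixedPt, ← Function.iterate_succ_apply' G]
    exact le_antisymm (heq ▸ h (Nat.succ_le_of_lt hlt)) (h (Nat.le_succ i))
  have hsplit : G^[Fintype.card β] x = G^[Fintype.card β - i] (G^[i] x) := by
    rw [← Function.iterate_add_apply, Nat.sub_add_cancel (Nat.lt_succ_iff.1 i.isLt)]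
  rw [hsplit, (hi.iterate _).eq]
  exact hi

theorem GaloisConnection.l_lfp_eq_iterate {α β : Type*} [CompleteLattice α] [PartialOrder β]
    [OrderBot β] [Fintype β] {l : α → β} {u : β → α} (gc : GaloisConnection l u) (Φ : α →o α)
    {G : β → β} (h : ∀ a, l (Φ a) = G (l a)) :
    l (OrderHom.lfp Φ) = G^[Fintype.card β] ⊥ := by
  have hiter : ∀ n, l (Φ^[n] ⊥) = G^[n] ⊥ := fun n => by
    rw [(Function.Semiconj.iterate_right h n).eq, gc.l_bot]
  have hfix := Monotone.isFixedPt_iterate_card (G := G) (x := ⊥) fun m n hmn => by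
    simpa only [← hiter] using
      gc.monotone_l (Monotone.monotone_iterate_of_le_map Φ.monotone bot_le hmn)
  have hle_lfp : ∀ n, Φ^[n] ⊥ ≤ OrderHom.lfp Φ := fun n => by
    induction n with
    | zero => exact bot_le
    | succ n ih => rw [Function.iterate_succ_apply']; exact Φ.map_le_lfp ih
  rw [← hiter] at hfix ⊢
  refine le_antisymm (gc.l_le (Φ.lfp_le (gc.le_u ?_))) (gc.monotone_l (hle_lfp _))
  rw [h, gc.l_u_l_eq_l]
  exact hfix.le

/-! ## Three-bit summaries of languages -/

/-- Whether a language is nonempty, contains a word that is not well-ordered, and contains a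
nonempty word (for sets of pairs: a pair other than `(u, ε)` with `u` well-ordered, and a pair
other than `(ε, ε)`). -/
abbrev Summary : Type := Bool × Bool × Bool

section Summary

variable {X Y Z : Type*}

open scoped Classical in
noncomputable def summary (p q : X → Prop) (S : Set X) : Summary :=
  (decide S.Nonempty, decide (∃ x ∈ S, ¬p x), decide (∃ x ∈ S, ¬q x))

def Summary.mul (a b : Summary) : Summary :=
  (a.1 && b.1, a.2.1 && b.1 || a.1 && b.2.1, a.2.2 && b.1 || a.1 && b.2.2)

theorem Summary.eq_iff : ∀ {a b : Summary}, a = b ↔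
    (a.1 = true ↔ b.1 = true) ∧ (a.2.1 = true ↔ b.2.1 = true) ∧ (a.2.2 = true ↔ b.2.2 = true) := by
  decide

variable {p q : X → Prop} {S : Set X}

@[simp] theorem summary_fst : (summary p q S).1 = true ↔ S.Nonempty := by simp [summary]

@[simp] theorem summary_snd_fst : (summary p q S).2.1 = true ↔ ∃ x ∈ S, ¬p x := by
  simp [summary]

@[simp] theorem summary_snd_snd : (summary p q S).2.2 = true ↔ ∃ x ∈ S, ¬q x := by
  simp [summary]

theorem summary_congr {p' q' : Y → Prop} {T : Set Y} (h₀ : S.Nonempty ↔ T.Nonempty)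
    (h₁ : (∃ x ∈ S, ¬p x) ↔ ∃ y ∈ T, ¬p' y) (h₂ : (∃ x ∈ S, ¬q x) ↔ ∃ y ∈ T, ¬q' y) :
    summary p q S = summary p' q' T := by
  simp only [Summary.eq_iff, summary_fst, summary_snd_fst, summary_snd_snd]
  exact ⟨h₀, h₁, h₂⟩

theorem summary_empty : summary p q ∅ = ⊥ := by
  simp only [Summary.eq_iff, summary_fst, summary_snd_fst, summary_snd_snd]
  simp

theorem summary_union (T : Set X) : summary p q (S ∪ T) = summary p q S ⊔ summary p q T := by
  simp only [Summary.eq_iff, summary_fst, summary_snd_fst, summary_snd_snd, Prod.fst_sup,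
    Prod.snd_sup, Bool.sup_eq_bor, Bool.or_eq_true, Set.union_nonempty, Set.mem_union,
    or_and_right, exists_or, iff_self, and_self]

theorem exists_mem_image2_not_iff {f : X → Y → Z} {p₁ : X → Prop} {p₂ : Y → Prop} {r : Z → Prop}
    (hr : ∀ x y, r (f x y) ↔ p₁ x ∧ p₂ y) (S : Set X) (T : Set Y) :
    (∃ z ∈ Set.image2 f S T, ¬r z) ↔
      (∃ x ∈ S, ¬p₁ x) ∧ T.Nonempty ∨ S.Nonempty ∧ ∃ y ∈ T, ¬p₂ y := by
  constructor
  · rintro ⟨_, ⟨x, hx, y, hy, rfl⟩, hxy⟩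
    rw [hr, not_and_or] at hxy
    exact hxy.imp (fun h => ⟨⟨x, hx, h⟩, y, hy⟩) fun h => ⟨⟨x, hx⟩, y, hy, h⟩
  · rintro (⟨⟨x, hx, h⟩, y, hy⟩ | ⟨⟨x, hx⟩, y, hy, h⟩)
    · exact ⟨f x y, Set.mem_image2_of_mem hx hy, fun h' => h ((hr x y).1 h').1⟩
    · exact ⟨f x y, Set.mem_image2_of_mem hx hy, fun h' => h ((hr x y).1 h').2⟩

theorem summary_image2 {f : X → Y → Z} {p₁ q₁ : X → Prop} {p₂ q₂ : Y → Prop} {p q : Z → Prop}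
    (hp : ∀ x y, p (f x y) ↔ p₁ x ∧ p₂ y) (hq : ∀ x y, q (f x y) ↔ q₁ x ∧ q₂ y)
    (S : Set X) (T : Set Y) :
    summary p q (Set.image2 f S T) = (summary p₁ q₁ S).mul (summary p₂ q₂ T) := by
  simp only [Summary.eq_iff, summary_fst, summary_snd_fst, summary_snd_snd, Summary.mul,
    Bool.or_eq_true, Bool.and_eq_true]
  exact ⟨Set.image2_nonempty_iff, exists_mem_image2_not_iff hp S T,
    exists_mem_image2_not_iff hq S T⟩

theorem gc_summary : GaloisConnection (summary p q) fun b => {x | summary p q {x} ≤ b} := by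
  intro S b
  simp only [Prod.le_def, Bool.le_iff_imp, summary_fst, summary_snd_fst, summary_snd_snd]
  simp [Set.subset_def, Set.Nonempty, imp_and, forall_and]

end Summary

namespace Summary

def letter : Summary := (true, false, true)

def eps : Summary := (true, false, false)

/-- The second component of a pair only matters through being empty or not. -/
def pair (a b : Summary) : Summary := a.mul (b.1, b.2.2, b.2.2)

def star (a : Summary) : Summary := (true, a.2)

end Summary

namespace Lang

variable {A : Type}

noncomputable def summary (L : Set (Word A)) : Summary :=
  _root_.summary Word.IsWellOrdered (· = Word.eps A) L

theorem conc_eq_image2 (L₁ L₂ : Set (Word A)) : conc L₁ L₂ = Set.image2 Word.append L₁ L₂ := by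
  ext; simp [conc, Set.mem_image2, eq_comm]

theorem summary_conc (L₁ L₂ : Set (Word A)) :
    summary (conc L₁ L₂) = (summary L₁).mul (summary L₂) := by
  rw [conc_eq_image2]
  exact summary_image2 Word.isWellOrdered_append_iff Word.append_eq_eps_iff L₁ L₂

theorem summary_singleton_letter (a : A) : summary {Word.letter a} = Summary.letter := by
  simp [summary, Summary.eq_iff, Summary.letter, Word.isWellOrdered_letter, Word.letter_ne_eps]

theorem summary_singleton_eps : summary {Word.eps A} = Summary.eps := by
  simp [summary, Summary.eq_iff, Summary.eps, Word.isWellOrdered_eps]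

end Lang

namespace PairLang

variable {A : Type}

noncomputable def summary (P : Set (Word A × Word A)) : Summary :=
  _root_.summary (fun r => r.1.IsWellOrdered ∧ r.2 = Word.eps A) (· = (Word.eps A, Word.eps A)) P

theorem summary_prod (L₁ L₂ : Set (Word A)) :
    summary (prod L₁ L₂) = (Lang.summary L₁).pair (Lang.summary L₂) := by
  have : prod L₁ L₂ = Set.image2 Prod.mk L₁ L₂ := Set.image2_mk_eq_prod.symm
  rw [this]
  exact summary_image2 (f := Prod.mk) (q₁ := (· = Word.eps A)) (p₂ := (· = Word.eps A))
    (q₂ := (· = Word.eps A)) (fun _ _ => Iff.rfl) (fun _ _ => Prod.mk_inj) L₁ L₂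

theorem pairMul_wellOrdered_iff (r s : Word A × Word A) :
    ((pairMul r s).1.IsWellOrdered ∧ (pairMul r s).2 = Word.eps A) ↔
      (r.1.IsWellOrdered ∧ r.2 = Word.eps A) ∧ s.1.IsWellOrdered ∧ s.2 = Word.eps A := by
  simp only [pairMul, Word.isWellOrdered_append_iff, Word.append_eq_eps_iff]
  tauto

theorem pairMul_eq_eps_iff (r s : Word A × Word A) :
    pairMul r s = (Word.eps A, Word.eps A) ↔
      r = (Word.eps A, Word.eps A) ∧ s = (Word.eps A, Word.eps A) := by
  simp only [pairMul, Prod.ext_iff, Word.append_eq_eps_iff]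
  tauto

theorem summary_conc (P Q : Set (Word A × Word A)) :
    summary (conc P Q) = (summary P).mul (summary Q) := by
  have : conc P Q = Set.image2 pairMul P Q := by
    ext; simp [conc, Set.mem_image2, eq_comm]
  rw [this]
  exact summary_image2 pairMul_wellOrdered_iff pairMul_eq_eps_iff P Q

theorem foldr_pairMul_iff {g : Word A × Word A → Prop} (hε : g (Word.eps A, Word.eps A))
    (hg : ∀ r s, g (pairMul r s) ↔ g r ∧ g s) (l : List (Word A × Word A)) :
    g (l.foldr pairMul (Word.eps A, Word.eps A)) ↔ ∀ r ∈ l, g r := by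
  induction l with
  | nil => simp [hε]
  | cons r l ih => simp [hg, ih]

theorem exists_mem_star_not_iff {g : Word A × Word A → Prop} (hε : g (Word.eps A, Word.eps A))
    (hg : ∀ r s, g (pairMul r s) ↔ g r ∧ g s) (P : Set (Word A × Word A)) :
    (∃ r ∈ star P, ¬g r) ↔ ∃ r ∈ P, ¬g r := by
  constructor
  · rintro ⟨_, ⟨l, hl, rfl⟩, hr⟩
    rw [foldr_pairMul_iff hε hg] at hr
    simp only [not_forall, exists_prop] at hr
    obtain ⟨r, hrl, hr⟩ := hr
    exact ⟨r, hl r hrl, hr⟩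
  · rintro ⟨r, hrP, hr⟩
    refine ⟨_, ⟨[r], by simpa using hrP, rfl⟩, ?_⟩
    rwa [foldr_pairMul_iff hε hg, List.forall_mem_singleton]

theorem summary_star (P : Set (Word A × Word A)) : summary (star P) = (summary P).star := by
  simp only [Summary.eq_iff, Summary.star, summary, summary_fst, summary_snd_fst, summary_snd_snd]
  exact ⟨iff_of_true ⟨_, [], by simp, rfl⟩ trivial,
    exists_mem_star_not_iff (by simp [Word.isWellOrdered_eps]) pairMul_wellOrdered_iff P,
    exists_mem_star_not_iff (g := (· = (Word.eps A, Word.eps A))) rfl pairMul_eq_eps_iff P⟩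

theorem summary_omegaPow (P : Set (Word A × Word A)) :
    Lang.summary (omegaPow P) = summary P := by
  refine summary_congr ?_ ?_ ?_
  · exact ⟨fun ⟨_, f, hf, _⟩ => ⟨f 0, hf 0⟩, fun ⟨r, hr⟩ => ⟨_, fun _ => r, fun _ => hr, rfl⟩⟩
  · constructor
    · rintro ⟨_, ⟨f, hf, rfl⟩, hw⟩
      by_contra! h
      exact hw (isWellOrdered_omegaWord fun n => h _ (hf n))
    · rintro ⟨r, hr, hbad⟩
      exact ⟨_, ⟨fun _ => r, fun _ => hr, rfl⟩, by rwa [isWellOrdered_omegaWord_const_iff]⟩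
  · constructor
    · rintro ⟨_, ⟨f, hf, rfl⟩, hw⟩
      by_contra! h
      exact hw ((omegaWord_eq_eps_iff f).2 fun n => Prod.ext_iff.1 (h _ (hf n)))
    · rintro ⟨r, hr, hbad⟩
      refine ⟨_, ⟨fun _ => r, fun _ => hr, rfl⟩, ?_⟩
      rw [omegaWord_eq_eps_iff, forall_const]
      exact fun h => hbad (Prod.ext h.1 h.2)

end PairLang

/-! ## The abstract semantics -/

mutual
  def TS.abstractDen {A : Type} : TS A → (ℕ → Summary) → Summary
    | .letter _, _ => Summary.letter
    | .eps, _ => Summary.eps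
    | .var x, σ => σ x
    | .add s t, σ => s.abstractDen σ ⊔ t.abstractDen σ
    | .mul s t, σ => (s.abstractDen σ).mul (t.abstractDen σ)
    | .mu x s, σ => (fun b => s.abstractDen (Function.update σ x b))^[Fintype.card Summary] ⊥
    | .omega p, σ => p.abstractDen σ

  def PS.abstractDen {A : Type} : PS A → (ℕ → Summary) → Summary
    | .pair s t, σ => (s.abstractDen σ).pair (t.abstractDen σ)
    | .add p q, σ => p.abstractDen σ ⊔ q.abstractDen σ
    | .mul p q, σ => (p.abstractDen σ).mul (q.abstractDen σ)
    | .star p, σ => (p.abstractDen σ).star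
end

mutual
  theorem TS.den_mono {A : Type} : ∀ t : TS A, Monotone t.den
    | .letter _ => monotone_const
    | .eps => monotone_const
    | .var x => fun _ _ h => h x
    | .add s t => (TS.den_mono s).sup (TS.den_mono t)
    | .mul s t => fun _ _ h => by
      simp only [TS.den, Lang.conc_eq_image2]
      exact Set.image2_subset (TS.den_mono s h) (TS.den_mono t h)
    | .mu x s => fun _ _ h => sInf_le_sInf fun _ hL =>
      (TS.den_mono s (update_le_update_iff.2 ⟨le_rfl, fun j _ => h j⟩)).trans hL
    | .omega p => fun _ _ h => by
      rintro _ ⟨f, hf, rfl⟩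
      exact ⟨f, fun i => PS.den_mono p h (hf i), rfl⟩

  theorem PS.den_mono {A : Type} : ∀ p : PS A, Monotone p.den
    | .pair s t => fun _ _ h _ hr => ⟨TS.den_mono s h hr.1, TS.den_mono t h hr.2⟩
    | .add p q => (PS.den_mono p).sup (PS.den_mono q)
    | .mul p q => fun _ _ h => by
      rintro _ ⟨a, ha, b, hb, rfl⟩
      exact ⟨a, PS.den_mono p h ha, b, PS.den_mono q h hb, rfl⟩
    | .star p => fun _ _ h => by
      rintro _ ⟨l, hl, rfl⟩
      exact ⟨l, fun r hr => PS.den_mono p h (hl r hr), rfl⟩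
end

mutual
  theorem TS.summary_den {A : Type} :
      ∀ (t : TS A) (ρ : ℕ → Set (Word A)),
        Lang.summary (t.den ρ) = t.abstractDen (Lang.summary ∘ ρ)
    | .letter a, _ => Lang.summary_singleton_letter a
    | .eps, _ => Lang.summary_singleton_eps
    | .var _, _ => rfl
    | .add s t, ρ => by
      simp only [TS.den, TS.abstractDen, ← TS.summary_den s ρ, ← TS.summary_den t ρ]
      exact summary_union _
    | .mul s t, ρ => by
      simp only [TS.den, TS.abstractDen, Lang.summary_conc, TS.summary_den s ρ, TS.summary_den t ρ]
    | .mu x s, ρ => by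
      let Φ : Set (Word A) →o Set (Word A) := ⟨fun L => s.den (Function.update ρ x L),
        fun _ _ h => TS.den_mono s (Function.update_mono h)⟩
      refine gc_summary.l_lfp_eq_iterate Φ fun L => ?_
      show Lang.summary (s.den _) = s.abstractDen (Function.update _ x (Lang.summary L))
      rw [TS.summary_den s, Function.comp_update]
    | .omega p, ρ => by
      simp only [TS.den, TS.abstractDen, PairLang.summary_omegaPow, PS.summary_den p ρ]

  theorem PS.summary_den {A : Type} :
      ∀ (p : PS A) (ρ : ℕ → Set (Word A)),
        PairLang.summary (p.den ρ) = p.abstractDen (Lang.summary ∘ ρ)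
    | .pair s t, ρ => by
      simp only [PS.den, PS.abstractDen, PairLang.summary_prod, TS.summary_den s ρ,
        TS.summary_den t ρ]
    | .add p q, ρ => by
      simp only [PS.den, PS.abstractDen, ← PS.summary_den p ρ, ← PS.summary_den q ρ]
      exact summary_union _
    | .mul p q, ρ => by
      simp only [PS.den, PS.abstractDen, PairLang.summary_conc, PS.summary_den p ρ,
        PS.summary_den q ρ]
    | .star p, ρ => by
      simp only [PS.den, PS.abstractDen, PairLang.summary_star, PS.summary_den p ρ]
end

theorem Nat.lt_pair_of_pos_left {k n : ℕ} (hk : 0 < k) : n < Nat.pair k n :=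
  lt_of_lt_of_le (by omega) (Nat.add_le_pair k n)

theorem Nat.left_lt_pair_pair {k : ℕ} (hk : 0 < k) (a b : ℕ) : a < Nat.pair k (Nat.pair a b) :=
  (Nat.left_le_pair a b).trans_lt (Nat.lt_pair_of_pos_left hk)

theorem Nat.right_lt_pair_pair {k : ℕ} (hk : 0 < k) (a b : ℕ) : b < Nat.pair k (Nat.pair a b) :=
  (Nat.right_le_pair a b).trans_lt (Nat.lt_pair_of_pos_left hk)

theorem Nat.left_le_pair_pair (k a b : ℕ) : a ≤ Nat.pair k (Nat.pair a b) :=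
  (Nat.left_le_pair a b).trans (Nat.right_le_pair k _)

theorem Nat.right_le_pair_pair (k a b : ℕ) : b ≤ Nat.pair k (Nat.pair a b) :=
  (Nat.right_le_pair a b).trans (Nat.right_le_pair k _)

mutual
  theorem TS.abstractDen_congr {A : Type} [Encodable A] :
      ∀ (t : TS A) {σ σ' : ℕ → Summary}, (∀ x ≤ t.code, σ x = σ' x) →
        t.abstractDen σ = t.abstractDen σ'
    | .letter _, _, _, _ => rfl
    | .eps, _, _, _ => rfl
    | .var x, _, _, h => h x (Nat.right_le_pair 2 x)
    | .add s t, _, _, h => by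
      simp only [TS.abstractDen]
      congr 1
      · exact TS.abstractDen_congr s fun y hy => h y (hy.trans (Nat.left_le_pair_pair 3 _ _))
      · exact TS.abstractDen_congr t fun y hy => h y (hy.trans (Nat.right_le_pair_pair 3 _ _))
    | .mul s t, _, _, h => by
      simp only [TS.abstractDen]
      congr 1
      · exact TS.abstractDen_congr s fun y hy => h y (hy.trans (Nat.left_le_pair_pair 4 _ _))
      · exact TS.abstractDen_congr t fun y hy => h y (hy.trans (Nat.right_le_pair_pair 4 _ _))
    | .mu x s, _, _, h => by
      simp only [TS.abstractDen]
      congr 1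
      funext b
      refine TS.abstractDen_congr s fun y hy => ?_
      rcases eq_or_ne y x with rfl | hyx
      · simp
      · simp only [Function.update_of_ne hyx]
        exact h y (hy.trans (Nat.right_le_pair_pair 5 _ _))
    | .omega p, _, _, h =>
      PS.abstractDen_congr p fun y hy => h y (hy.trans (Nat.right_le_pair 6 _))

  theorem PS.abstractDen_congr {A : Type} [Encodable A] :
      ∀ (p : PS A) {σ σ' : ℕ → Summary}, (∀ x ≤ p.code, σ x = σ' x) →
        p.abstractDen σ = p.abstractDen σ'
    | .pair s t, _, _, h => by
      simp only [PS.abstractDen]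
      congr 1
      · exact TS.abstractDen_congr s fun y hy => h y (hy.trans (Nat.left_le_pair_pair 7 _ _))
      · exact TS.abstractDen_congr t fun y hy => h y (hy.trans (Nat.right_le_pair_pair 7 _ _))
    | .add p q, _, _, h => by
      simp only [PS.abstractDen]
      congr 1
      · exact PS.abstractDen_congr p fun y hy => h y (hy.trans (Nat.left_le_pair_pair 8 _ _))
      · exact PS.abstractDen_congr q fun y hy => h y (hy.trans (Nat.right_le_pair_pair 8 _ _))
    | .mul p q, _, _, h => by
      simp only [PS.abstractDen]
      congr 1
      · exact PS.abstractDen_congr p fun y hy => h y (hy.trans (Nat.left_le_pair_pair 9 _ _))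
      · exact PS.abstractDen_congr q fun y hy => h y (hy.trans (Nat.right_le_pair_pair 9 _ _))
    | .star p, _, _, h => by
      simp only [PS.abstractDen]
      congr 1
      exact PS.abstractDen_congr p fun y hy => h y (hy.trans (Nat.right_le_pair 10 _))
end

/-! ## Computing the abstract semantics on codes -/

section Digits

def digit (b e x : ℕ) : ℕ := e / b ^ x % b

def setDigit (b e x d : ℕ) : ℕ := e % b ^ x + b ^ x * (d + b * (e / b ^ (x + 1)))

variable {b e x d : ℕ}

theorem digit_mod_pow {k : ℕ} (hx : x ≤ k) : digit b (e % b ^ (k + 1)) x = digit b e x := by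
  have hsplit : b ^ (k + 1) = b ^ x * b ^ (k + 1 - x) := by
    rw [← pow_add, Nat.add_sub_cancel' (by omega)]
  rw [digit, digit, hsplit, Nat.mod_mul_right_div_self,
    Nat.mod_mod_of_dvd _ (dvd_pow_self b (by omega))]

theorem setDigit_mod_pow {y : ℕ} (hy : y < x) :
    setDigit b e x d % b ^ (y + 1) = e % b ^ (y + 1) := by
  obtain ⟨c, hc⟩ : b ^ (y + 1) ∣ b ^ x := pow_dvd_pow b hy
  rw [setDigit, hc, mul_assoc, Nat.add_mul_mod_self_left, Nat.mod_mul_right_mod]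

theorem setDigit_div_pow (hd : d < b) : setDigit b e x d / b ^ (x + 1) = e / b ^ (x + 1) := by
  have hlow : e % b ^ x + b ^ x * d < b ^ (x + 1) := by
    have := Nat.mod_lt e (pow_pos (show 0 < b by omega) x)
    have := Nat.mul_le_mul_left (b ^ x) (show d + 1 ≤ b by omega)
    rw [pow_succ]
    linarith
  have hsplit : setDigit b e x d = e % b ^ x + b ^ x * d + b ^ (x + 1) * (e / b ^ (x + 1)) := by
    rw [setDigit, pow_succ]
    ring
  rw [hsplit, Nat.add_mul_div_left _ _ (pow_pos (by omega) _), Nat.div_eq_of_lt hlow, zero_add]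

theorem digit_setDigit_self (hd : d < b) : digit b (setDigit b e x d) x = d := by
  have hb : 0 < b ^ x := pow_pos (by omega) x
  rw [digit, setDigit, Nat.add_mul_div_left _ _ hb, Nat.div_eq_of_lt (Nat.mod_lt _ hb), zero_add,
    Nat.add_mul_mod_self_left, Nat.mod_eq_of_lt hd]

theorem digit_setDigit_of_ne {y : ℕ} (hd : d < b) (hy : y ≠ x) :
    digit b (setDigit b e x d) y = digit b e y := by
  rcases Nat.lt_or_gt_of_ne hy with hy | hy
  · rw [← digit_mod_pow le_rfl, setDigit_mod_pow hy, digit_mod_pow le_rfl]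
  · have key : ∀ e', digit b e' y = e' / b ^ (x + 1) / b ^ (y - (x + 1)) % b := fun e' => by
      rw [digit, Nat.div_div_eq_div_mul, ← pow_add, Nat.add_sub_cancel' hy]
    rw [key, key, setDigit_div_pow hd]

end Digits

namespace Summary

def toNat (a : Summary) : ℕ := a.1.toNat + 2 * a.2.1.toNat + 4 * a.2.2.toNat

def ofNat (d : ℕ) : Summary := (d % 2 == 1, d / 2 % 2 == 1, d / 4 % 2 == 1)

theorem ofNat_toNat : ∀ a : Summary, ofNat a.toNat = a := by decide

theorem toNat_lt : ∀ a : Summary, a.toNat < 8 := by decide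

end Summary

namespace SummaryTable

def decodeEnv (e x : ℕ) : Summary := Summary.ofNat (digit 8 e x)

theorem decodeEnv_zero : decodeEnv 0 = ⊥ := by
  funext x
  simp only [decodeEnv, digit, Nat.zero_div, Nat.zero_mod]
  rfl

theorem decodeEnv_mod_pow {e k x : ℕ} (hx : x ≤ k) :
    decodeEnv (e % 8 ^ (k + 1)) x = decodeEnv e x := by
  simp only [decodeEnv, digit_mod_pow hx]

theorem decodeEnv_setDigit (e x : ℕ) (a : Summary) :
    decodeEnv (setDigit 8 e x a.toNat) = Function.update (decodeEnv e) x a := by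
  funext y
  rcases eq_or_ne y x with rfl | hy
  · rw [Function.update_self, decodeEnv, digit_setDigit_self (Summary.toNat_lt a),
      Summary.ofNat_toNat]
  · rw [Function.update_of_ne hy, decodeEnv, digit_setDigit_of_ne (Summary.toNat_lt a) hy]
    rfl

def lookup (rows : List (List Summary)) (m e : ℕ) : Summary :=
  (rows.getD m []).getD (e % 8 ^ (m + 1)) ⊥

/-- Numbers are read as the codes `TS.code` and `PS.code`; tags `3, 8` and `4, 9` share their
abstract operation, and a number that codes no expression gets a meaningless value. -/
def entry (rows : List (List Summary)) (n e : ℕ) : Summary :=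
  let k := n.unpair.1
  let a := n.unpair.2
  if k = 0 then Summary.letter
  else if k = 1 then Summary.eps
  else if k = 2 then decodeEnv e a
  else if k = 3 ∨ k = 8 then lookup rows a.unpair.1 e ⊔ lookup rows a.unpair.2 e
  else if k = 4 ∨ k = 9 then (lookup rows a.unpair.1 e).mul (lookup rows a.unpair.2 e)
  else if k = 5 then
    (fun b => lookup rows a.unpair.2 (setDigit 8 e a.unpair.1 b.toNat))^[Fintype.card Summary] ⊥
  else if k = 6 then lookup rows a e
  else if k = 7 then (lookup rows a.unpair.1 e).pair (lookup rows a.unpair.2 e)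
  else (lookup rows a e).star

/-- Row `n` lists the abstract value of the expression with code `n` in the environments
`decodeEnv e`, `e < 8 ^ (n + 1)`: these are all the environments of the variables `≤ n`, and
no other variable occurs in that expression. -/
def row (n : ℕ) : List Summary :=
  (List.range (8 ^ (n + 1))).map (entry ((List.range n).attach.map fun m => row m.1) n)
decreasing_by exact List.mem_range.1 m.2

theorem row_eq (n : ℕ) :
    row n = (List.range (8 ^ (n + 1))).map (entry ((List.range n).map row) n) := by
  rw [row, List.attach_map_val]

theorem row_getD {n e : ℕ} (he : e < 8 ^ (n + 1)) :
    (row n).getD e ⊥ = entry ((List.range n).map row) n e := by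
  rw [row_eq, List.getD_eq_getElem?_getD, List.getElem?_map, List.getElem?_range he]
  rfl

theorem lookup_rows_eq {m n : ℕ} (hmn : m < n) {F : (ℕ → Summary) → Summary}
    (hF : ∀ σ σ' : ℕ → Summary, (∀ x ≤ m, σ x = σ' x) → F σ = F σ')
    (h : ∀ e, entry ((List.range m).map row) m e = F (decodeEnv e)) (e : ℕ) :
    lookup ((List.range n).map row) m e = F (decodeEnv e) := by
  have hrow : ((List.range n).map row).getD m [] = row m := by
    rw [List.getD_eq_getElem?_getD, List.getElem?_map, List.getElem?_range hmn]
    rfl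
  rw [lookup, hrow, row_getD (Nat.mod_lt _ (by positivity)), h]
  exact hF _ _ fun x hx => decodeEnv_mod_pow hx

end SummaryTable

open SummaryTable

mutual
  theorem TS.entry_code {A : Type} [Encodable A] :
      ∀ (t : TS A) (e : ℕ),
        entry ((List.range t.code).map row) t.code e = t.abstractDen (decodeEnv e)
    | .letter _, _ => by simp [TS.code, entry, TS.abstractDen]
    | .eps, _ => by simp [TS.code, entry, TS.abstractDen]
    | .var _, _ => by simp [TS.code, entry, TS.abstractDen]
    | .add s t, e => by
      have hs := lookup_rows_eq (Nat.left_lt_pair_pair (k := 3) (by norm_num) s.code t.code)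
        (fun _ _ => TS.abstractDen_congr s) (TS.entry_code s)
      have ht := lookup_rows_eq (Nat.right_lt_pair_pair (k := 3) (by norm_num) s.code t.code)
        (fun _ _ => TS.abstractDen_congr t) (TS.entry_code t)
      simp [TS.code, entry, TS.abstractDen, hs, ht]
    | .mul s t, e => by
      have hs := lookup_rows_eq (Nat.left_lt_pair_pair (k := 4) (by norm_num) s.code t.code)
        (fun _ _ => TS.abstractDen_congr s) (TS.entry_code s)
      have ht := lookup_rows_eq (Nat.right_lt_pair_pair (k := 4) (by norm_num) s.code t.code)
        (fun _ _ => TS.abstractDen_congr t) (TS.entry_code t)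
      simp [TS.code, entry, TS.abstractDen, hs, ht]
    | .mu x s, e => by
      have hs := lookup_rows_eq (Nat.right_lt_pair_pair (k := 5) (by norm_num) x s.code)
        (fun _ _ => TS.abstractDen_congr s) (TS.entry_code s)
      simp [TS.code, entry, TS.abstractDen, hs, decodeEnv_setDigit]
    | .omega p, e => by
      have hp := lookup_rows_eq (Nat.lt_pair_of_pos_left (k := 6) (n := p.code) (by norm_num))
        (fun _ _ => PS.abstractDen_congr p) (PS.entry_code p)
      simp [TS.code, entry, TS.abstractDen, hp]

  theorem PS.entry_code {A : Type} [Encodable A] :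
      ∀ (p : PS A) (e : ℕ),
        entry ((List.range p.code).map row) p.code e = p.abstractDen (decodeEnv e)
    | .pair s t, e => by
      have hs := lookup_rows_eq (Nat.left_lt_pair_pair (k := 7) (by norm_num) s.code t.code)
        (fun _ _ => TS.abstractDen_congr s) (TS.entry_code s)
      have ht := lookup_rows_eq (Nat.right_lt_pair_pair (k := 7) (by norm_num) s.code t.code)
        (fun _ _ => TS.abstractDen_congr t) (TS.entry_code t)
      simp [PS.code, entry, PS.abstractDen, hs, ht]
    | .add p q, e => by
      have hp := lookup_rows_eq (Nat.left_lt_pair_pair (k := 8) (by norm_num) p.code q.code)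
        (fun _ _ => PS.abstractDen_congr p) (PS.entry_code p)
      have hq := lookup_rows_eq (Nat.right_lt_pair_pair (k := 8) (by norm_num) p.code q.code)
        (fun _ _ => PS.abstractDen_congr q) (PS.entry_code q)
      simp [PS.code, entry, PS.abstractDen, hp, hq]
    | .mul p q, e => by
      have hp := lookup_rows_eq (Nat.left_lt_pair_pair (k := 9) (by norm_num) p.code q.code)
        (fun _ _ => PS.abstractDen_congr p) (PS.entry_code p)
      have hq := lookup_rows_eq (Nat.right_lt_pair_pair (k := 9) (by norm_num) p.code q.code)
        (fun _ _ => PS.abstractDen_congr q) (PS.entry_code q)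
      simp [PS.code, entry, PS.abstractDen, hp, hq]
    | .star p, e => by
      have hp := lookup_rows_eq (Nat.lt_pair_of_pos_left (k := 10) (n := p.code) (by norm_num))
        (fun _ _ => PS.abstractDen_congr p) (PS.entry_code p)
      simp [PS.code, entry, PS.abstractDen, hp]
end

theorem TS.row_code_getD_zero {A : Type} [Encodable A] (t : TS A) :
    (row t.code).getD 0 ⊥ = Lang.summary (t.den fun _ => ∅) := by
  rw [row_getD (by positivity), TS.entry_code, decodeEnv_zero, TS.summary_den]
  congr 1
  funext
  exact summary_empty.symm

section Primrec

open Primrec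

theorem Primrec.nat_pow : Primrec₂ ((· ^ ·) : ℕ → ℕ → ℕ) :=
  Primrec₂.unpaired'.1 Nat.Primrec.pow

theorem Summary.primrec_ofNat : Primrec Summary.ofNat := by
  refine Primrec.pair ?_ (Primrec.pair ?_ ?_) <;> refine Primrec.beq.comp ?_ (const 1)
  · exact nat_mod.comp .id (const 2)
  · exact nat_mod.comp (nat_div.comp .id (const 2)) (const 2)
  · exact nat_mod.comp (nat_div.comp .id (const 4)) (const 2)

theorem primrec_digit (b : ℕ) : Primrec₂ (digit b) :=
  nat_mod.comp₂ (nat_div.comp₂ Primrec₂.left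
    (Primrec.nat_pow.comp₂ (Primrec₂.const b) Primrec₂.right)) (Primrec₂.const b)

theorem primrec_setDigit (b : ℕ) :
    Primrec fun p : ℕ × ℕ × ℕ => setDigit b p.1 p.2.1 p.2.2 := by
  have hpow : ∀ {f : ℕ × ℕ × ℕ → ℕ}, Primrec f → Primrec fun p => b ^ f p :=
    fun hf => Primrec.nat_pow.comp (const b) hf
  have he : Primrec fun p : ℕ × ℕ × ℕ => p.1 := fst
  have hx : Primrec fun p : ℕ × ℕ × ℕ => p.2.1 := fst.comp snd
  have hd : Primrec fun p : ℕ × ℕ × ℕ => p.2.2 := snd.comp snd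
  exact nat_add.comp (nat_mod.comp he (hpow hx)) (nat_mul.comp (hpow hx)
    (nat_add.comp hd (nat_mul.comp (const b) (nat_div.comp he (hpow (succ.comp hx))))))

namespace SummaryTable

theorem primrec_decodeEnv : Primrec₂ decodeEnv :=
  Summary.primrec_ofNat.comp₂ (primrec_digit 8)

theorem primrec_lookup :
    Primrec fun p : List (List Summary) × ℕ × ℕ => lookup p.1 p.2.1 p.2.2 := by
  have hm : Primrec fun p : List (List Summary) × ℕ × ℕ => p.2.1 := fst.comp snd
  exact (list_getD ⊥).comp ((list_getD []).comp fst hm)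
    (nat_mod.comp (snd.comp snd) (Primrec.nat_pow.comp (const 8) (succ.comp hm)))

theorem primrec_entry :
    Primrec fun p : List (List Summary) × ℕ × ℕ => entry p.1 p.2.1 p.2.2 := by
  have hn : Primrec fun p : List (List Summary) × ℕ × ℕ => p.2.1.unpair :=
    unpair.comp (fst.comp snd)
  have he : Primrec fun p : List (List Summary) × ℕ × ℕ => p.2.2 := snd.comp snd
  have ha := snd.comp hn
  have ha₁ := fst.comp (unpair.comp ha)
  have ha₂ := snd.comp (unpair.comp ha)
  have hk : ∀ c, PrimrecPred fun p : List (List Summary) × ℕ × ℕ => p.2.1.unpair.1 = c :=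
    fun c => Primrec.eq.comp (fst.comp hn) (const c)
  have hlookup : ∀ {m : List (List Summary) × ℕ × ℕ → ℕ}, Primrec m →
      Primrec fun p => lookup p.1 (m p) p.2.2 :=
    fun hm => primrec_lookup.comp (pair fst (pair hm he))
  have hsup : Primrec₂ fun a b : Summary => a ⊔ b :=
    (dom_finite fun q : Summary × Summary => q.1 ⊔ q.2).to₂
  have hmul : Primrec₂ Summary.mul := (dom_finite fun q : Summary × Summary => q.1.mul q.2).to₂
  have hpair : Primrec₂ Summary.pair :=
    (dom_finite fun q : Summary × Summary => q.1.pair q.2).to₂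
  have hmu : Primrec₂ fun (p : List (List Summary) × ℕ × ℕ) (b : Summary) =>
      lookup p.1 p.2.1.unpair.2.unpair.2 (setDigit 8 p.2.2 p.2.1.unpair.2.unpair.1 b.toNat) :=
    (primrec_lookup.comp (pair (fst.comp fst) (pair (ha₂.comp fst) ((primrec_setDigit 8).comp
      (pair (he.comp fst) (pair (ha₁.comp fst) ((dom_finite Summary.toNat).comp snd))))))).to₂
  unfold entry
  refine ite (hk 0) (const _) (ite (hk 1) (const _) (ite (hk 2) (primrec_decodeEnv.comp he ha)
    (ite ((hk 3).or (hk 8)) (hsup.comp (hlookup ha₁) (hlookup ha₂))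
    (ite ((hk 4).or (hk 9)) (hmul.comp (hlookup ha₁) (hlookup ha₂))
    (ite (hk 5) (nat_iterate (const _) (const _) hmu)
    (ite (hk 6) (hlookup ha)
    (ite (hk 7) (hpair.comp (hlookup ha₁) (hlookup ha₂))
    ((dom_finite Summary.star).comp (hlookup ha)))))))))

theorem primrec_row : Primrec row := by
  have hstep : Primrec₂ fun (_ : Unit) (rows : List (List Summary)) =>
      some ((List.range (8 ^ (rows.length + 1))).map (entry rows rows.length)) := by
    refine (option_some.comp (list_map (list_range.comp (Primrec.nat_pow.comp (const 8)
      (succ.comp list_length))) ?_)).comp₂ Primrec₂.right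
    exact (primrec_entry.comp (pair fst (pair (list_length.comp fst) snd))).to₂
  exact (nat_strong_rec (fun _ => row) hstep fun _ n => by simp [row_eq n]).comp (const ()) .id

end SummaryTable

end Primrec

/-- It is decidable, given a closed `μωT_s`-expression `t` of syntactic category `T` over
`Σ`, whether the language denoted by `t` consists of well-ordered words only: there is a
computable function on the codes of expressions deciding this property. -/
theorem decidable_wellOrdered_denotation (Alph : Type) [Fintype Alph] [Nonempty Alph]
    [Encodable Alph] :
    ∃ f : ℕ → Bool, Computable f ∧
      ∀ t : TS Alph, t.free = ∅ →
        (f t.code = true ↔ ∀ w ∈ t.den (fun _ => ∅), w.IsWellOrdered) := by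
  refine ⟨fun n => !((row n).getD 0 ⊥).2.1, ?_, fun t _ => ?_⟩
  · exact (Primrec.not.comp (Primrec.fst.comp (Primrec.snd.comp
      ((Primrec.list_getD ⊥).comp primrec_row (Primrec.const 0))))).to_comp
  · simp only [TS.row_code_getD_zero, Bool.not_eq_true', Bool.eq_false_iff, ne_eq, Lang.summary,
      summary_snd_fst, not_exists, not_and, not_not]
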